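/- arXiv:2203.01106 — 4 statements merged into one kernel-verified Lean document; each statement's English description precedes it below -/
import Mathlib

section
/- Define X : SU(2,1) → ℂ by X(g) = −a if the bottom-left entry a of g is nonzero, and X(g) = c (the bottom-right entry) if a = 0. Then for every g ∈ SU(2,1) and every τ ∈ H, X(g) ≠ 0 and the complex number j(g,τ)/X(g) has positive real part. -/
/-!
Since `J² = 1`, the relation `gᴴ J g = J` also gives `g J gᴴ = J`, so the bottom row `(a, b, c)`
of `g` is `J`-isotropic: `2 Re (c ā) + |b|² = 0`. If `a = 0` this forces `b = 0`, hence
`j(g, τ) = c = X(g)`, and `c ≠ 0` because `det g ≠ 0`. If `a ≠ 0`, then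
`Re (j ā) = |a|² Re τ₁ + Re (b ā τ₂) - |b|²/2 ≤ |a|² (Re τ₁ + |τ₂|²/2) < 0` by AM-GM,
which says exactly that `j / (-a)` has positive real part.
-/

noncomputable section

open Matrix Complex

/-- The Hermitian form matrix `J`. -/
def Jmat : Matrix (Fin 3) (Fin 3) ℂ := !![0,0,1; 0,1,0; 1,0,0]

/-- The group `SU(2,1)` as a subset of 3×3 complex matrices. -/
def SU21 : Set (Matrix (Fin 3) (Fin 3) ℂ) :=
  {g | g.det = 1 ∧ gᴴ * Jmat * g = Jmat}

/-- The symmetric space `H = {τ ∈ ℂ² : 2 Re τ₁ + |τ₂|² < 0}`. -/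
def UpperH : Set (ℂ × ℂ) := {τ | 2 * τ.1.re + Complex.normSq τ.2 < 0}

/-- The automorphy factor `j(g,τ) = Cτ + D`. -/
def jcocycle (g : Matrix (Fin 3) (Fin 3) ℂ) (τ : ℂ × ℂ) : ℂ :=
  g 2 0 * τ.1 + g 2 1 * τ.2 + g 2 2

/-- The action `g*τ = (Aτ+B)/(Cτ+D)`. -/
def act (g : Matrix (Fin 3) (Fin 3) ℂ) (τ : ℂ × ℂ) : ℂ × ℂ :=
  ((g 0 0 * τ.1 + g 0 1 * τ.2 + g 0 2) / jcocycle g τ,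
   (g 1 0 * τ.1 + g 1 1 * τ.2 + g 1 2) / jcocycle g τ)

/-- The function `X(g)`: minus the bottom-left entry when that is nonzero,
and otherwise the bottom-right entry. -/
def Xfun (g : Matrix (Fin 3) (Fin 3) ℂ) : ℂ :=
  if g 2 0 ≠ 0 then -(g 2 0) else g 2 2

open ComplexConjugate

lemma Jmat_mul_Jmat : Jmat * Jmat = 1 := by
  ext i j
  fin_cases i <;> fin_cases j <;> simp [Jmat, Matrix.mul_apply, Fin.sum_univ_three]

lemma mul_Jmat_mul_conjTranspose {g : Matrix (Fin 3) (Fin 3) ℂ} (h : gᴴ * Jmat * g = Jmat) :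
    g * Jmat * gᴴ = Jmat := by
  have hleft : (Jmat * gᴴ * Jmat) * g = 1 := by
    rw [show Jmat * gᴴ * Jmat * g = Jmat * (gᴴ * Jmat * g) by simp only [Matrix.mul_assoc], h,
      Jmat_mul_Jmat]
  calc g * Jmat * gᴴ = g * (Jmat * gᴴ * Jmat) * Jmat := by
        simp only [Matrix.mul_assoc, Jmat_mul_Jmat, Matrix.mul_one]
    _ = Jmat := by rw [mul_eq_one_comm.mp hleft, Matrix.one_mul]

lemma bottom_row_isotropic {g : Matrix (Fin 3) (Fin 3) ℂ} (h : gᴴ * Jmat * g = Jmat) :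
    2 * (g 2 2 * conj (g 2 0)).re + normSq (g 2 1) = 0 := by
  have h22 := congrArg Complex.re (congrFun (congrFun (mul_Jmat_mul_conjTranspose h) 2) 2)
  simp only [Jmat, Fin.isValue, Matrix.mul_apply, of_apply, cons_val', cons_val_fin_one,
    Fin.sum_univ_three, cons_val_zero, cons_val_one, cons_val, conjTranspose_apply,
    RCLike.star_def, mul_zero, add_zero, mul_one, zero_add, add_re, mul_re, conj_re, conj_im,
    mul_neg, sub_neg_eq_add, zero_re] at h22
  simp only [mul_re, conj_re, conj_im, normSq_apply]
  linarith

lemma re_mul_conj_neg_of_isotropic {a b c τ₁ τ₂ : ℂ} (ha : a ≠ 0)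
    (hrow : 2 * (c * conj a).re + normSq b = 0) (hτ : 2 * τ₁.re + normSq τ₂ < 0) :
    ((a * τ₁ + b * τ₂ + c) * conj a).re < 0 := by
  have hexpand : ((a * τ₁ + b * τ₂ + c) * conj a).re
      = normSq a * τ₁.re + (b * conj a * τ₂).re + (c * conj a).re := by
    rw [← re_ofReal_mul, ← add_re, ← add_re, ← mul_conj]
    ring_nf
  have hcross : (b * conj a * τ₂).re ≤ ‖b‖ * ‖a‖ * ‖τ₂‖ := by
    simpa [norm_mul] using re_le_norm (b * conj a * τ₂)
  have hpos : 0 < ‖a‖ := norm_pos_iff.mpr ha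
  rw [← Complex.sq_norm] at hrow hτ
  rw [hexpand, ← Complex.sq_norm]
  nlinarith [sq_nonneg (‖b‖ - ‖a‖ * ‖τ₂‖), mul_pos hpos hpos]

lemma re_div_neg_pos_of_re_mul_conj_neg {z a : ℂ} (h : (z * conj a).re < 0) :
    0 < (z / -a).re := by
  have ha : a ≠ 0 := by rintro rfl; simp at h
  have hre : (z / -a).re = -(z * conj a).re / normSq a := by
    simp only [div_re, mul_re, conj_re, conj_im, neg_re, neg_im, normSq_neg]
    ring
  rw [hre]
  exact div_pos (neg_pos.mpr h) (normSq_pos.mpr ha)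

/-- For `g ∈ SU(2,1)` and `τ ∈ H`, `X(g) ≠ 0` and `j(g,τ)/X(g)` has positive
real part. -/
theorem Xfun_ne_zero_and_jcocycle_div_Xfun_re_pos
    (g : Matrix (Fin 3) (Fin 3) ℂ) (hg : g ∈ SU21) (τ : ℂ × ℂ) (hτ : τ ∈ UpperH) :
    Xfun g ≠ 0 ∧ 0 < (jcocycle g τ / Xfun g).re := by
  obtain ⟨hdet, hJ⟩ := hg
  have hrow := bottom_row_isotropic hJ
  by_cases ha : g 2 0 = 0
  · have hb : g 2 1 = 0 := by simpa [ha] using hrow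
    have hc : g 2 2 ≠ 0 := fun hc => by
      have hzero : g.det = 0 := det_eq_zero_of_row_eq_zero 2 fun j => by
        fin_cases j <;> assumption
      simp [hdet] at hzero
    have hX : Xfun g = g 2 2 := by simp [Xfun, ha]
    have hj : jcocycle g τ = g 2 2 := by simp [jcocycle, ha, hb]
    simp [hX, hj, hc]
  · have hX : Xfun g = -g 2 0 := if_pos ha
    rw [hX]
    exact ⟨neg_ne_zero.mpr ha,
      re_div_neg_pos_of_re_mul_conj_neg (re_mul_conj_neg_of_isotropic ha hrow hτ)⟩
end
end

section
/- Let Γ be a subgroup of SU(2,1), Γ̃ its preimage in the central extension G̃ = SU(2,1) ×_σ ℤ, and w a rational number. If ℓ is a multiplier system on Γ of weight w, then the function Φ(g,n) = ℓ(g,τ)·exp(w(2πi·n − j̃(g,τ))) is independent of τ ∈ H and defines a group homomorphism Φ : Γ̃ → ℂ^×, satisfying Φ(I₃,1) = e^{2πi w}. -/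
/-!
The Hermitian form `Q(v) = v* J v` is invariant under `SU(2,1)`, `H` is the set of `τ` with
`Q(τ₁, τ₂, 1) < 0`, and `g (τ₁, τ₂, 1) = j(g,τ) (g*τ, 1)`. Hence `j(g, ·)` has no zero on `H` and
`g` maps `H` to itself. A zero-free `j(g, ·)` forces `j(g,τ)/X(g)` off the cut `(-∞, 0]`, so
`j̃(g, ·)` is a continuous logarithm of `j(g, ·)` on the convex set `H`. The function
`ℓ(g,τ) exp(-w j̃(g,τ))` is then continuous with constant `b`-th power `χ(g)`, hence constant.
Evaluating at a base point, the cocycle relations of `ℓ` and `j` and `exp(2πi σ) = 1` give the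
homomorphism property.
-/

noncomputable section

open Matrix Complex

/-- The branch `j̃(g,τ) = log(j(g,τ)/X(g)) + log(X(g))` of `log j(g,τ)`,
using the principal branch of `log` (imaginary part in `(-π, π]`). -/
def jtilde (g : Matrix (Fin 3) (Fin 3) ℂ) (τ : ℂ × ℂ) : ℂ :=
  Complex.log (jcocycle g τ / Xfun g) + Complex.log (Xfun g)

/-- A fixed base point of `H`. -/
def τ0 : ℂ × ℂ := (-1, 0)

/-- The (complex-valued expression for the) cocycle
`σ(g,h) = (1/2πi)(j̃(gh,τ) − j̃(g,h*τ) − j̃(h,τ))`, evaluated at the base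
point `τ0 ∈ H`. -/
def sigmaC (g h : Matrix (Fin 3) (Fin 3) ℂ) : ℂ :=
  (jtilde (g * h) τ0 - jtilde g (act h τ0) - jtilde h τ0) / (2 * Real.pi * Complex.I)

/-- The integer-valued cocycle `σ` (for `g,h ∈ SU(2,1)` the quantity `sigmaC g h`
is an integer, so taking the floor of its real part recovers it). -/
def sigmaZ (g h : Matrix (Fin 3) (Fin 3) ℂ) : ℤ := ⌊(sigmaC g h).re⌋

/-- The twisted multiplication on `SU(2,1) × ℤ` defining the universal cover. -/
def gmul (p q : Matrix (Fin 3) (Fin 3) ℂ × ℤ) : Matrix (Fin 3) (Fin 3) ℂ × ℤ :=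
  (p.1 * q.1, p.2 + q.2 + sigmaZ p.1 q.1)

lemma IsPreconnected.eq_of_pow_eq_const {X K : Type*} [TopologicalSpace X] [Field K]
    [TopologicalSpace K] [T1Space K] {S : Set X} (hS : IsPreconnected S) {f : X → K}
    (hf : ContinuousOn f S) {b : ℕ} (hb : b ≠ 0) {c : K} (hfc : ∀ x ∈ S, f x ^ b = c)
    {x y : X} (hx : x ∈ S) (hy : y ∈ S) : f x = f y := by
  classical
  have hroots : {z : K | z ^ b = c} ⊆ (Polynomial.nthRoots b c).toFinset := fun z hz => by
    simpa [Polynomial.mem_nthRoots (Nat.pos_of_ne_zero hb)] using hz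
  exact hS.constant_of_mapsTo ((Finset.finite_toSet _).subset hroots).isDiscrete hf
    (fun x hx => hfc x hx) hx hy

lemma exists_int_eq_of_exp_eq_one {z : ℂ} (hz : exp z = 1) :
    ∃ k : ℤ, z / (2 * Real.pi * I) = k := by
  obtain ⟨k, hk⟩ := exp_eq_one_iff.mp hz
  exact ⟨k, by rw [hk, mul_div_cancel_right₀ _ two_pi_I_ne_zero]⟩

lemma exp_mul_pow_eq_exp_zpow {c : ℂ} {a : ℤ} {b : ℕ} (hc : c * b = a) (z : ℂ) :
    exp (c * z) ^ b = exp z ^ a := by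
  rw [← exp_nat_mul, ← exp_int_mul, ← hc]; ring_nf

def hermQ (v : Fin 3 → ℂ) : ℝ := (star v ⬝ᵥ Jmat *ᵥ v).re

lemma hermQ_eq (v : Fin 3 → ℂ) : hermQ v = 2 * (star (v 0) * v 2).re + normSq (v 1) := by
  simp [hermQ, Jmat, dotProduct, mulVec, Fin.sum_univ_three, Complex.normSq_apply]
  ring

lemma hermQ_mulVec {g : Matrix (Fin 3) (Fin 3) ℂ} (hg : g ∈ SU21) (v : Fin 3 → ℂ) :
    hermQ (g *ᵥ v) = hermQ v := by
  rw [hermQ, hermQ, star_mulVec, mulVec_mulVec, dotProduct_mulVec, vecMul_vecMul,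
    ← dotProduct_mulVec, ← Matrix.mul_assoc, hg.2]

lemma hermQ_smul (c : ℂ) (v : Fin 3 → ℂ) : hermQ (c • v) = normSq c * hermQ v := by
  simp only [hermQ_eq, Pi.smul_apply, smul_eq_mul, star_mul', normSq_mul]
  rw [show star c * star (v 0) * (c * v 2) = (normSq c : ℂ) * (star (v 0) * v 2) by
    rw [normSq_eq_conj_mul_self]; simp only [RCLike.star_def]; ring]
  rw [re_ofReal_mul]; ring

def homCoords (τ : ℂ × ℂ) : Fin 3 → ℂ := ![τ.1, τ.2, 1]

lemma hermQ_homCoords (τ : ℂ × ℂ) : hermQ (homCoords τ) = 2 * τ.1.re + normSq τ.2 := by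
  simp [hermQ_eq, homCoords]

lemma mulVec_homCoords_two (g : Matrix (Fin 3) (Fin 3) ℂ) (τ : ℂ × ℂ) :
    (g *ᵥ homCoords τ) 2 = jcocycle g τ := by
  simp [homCoords, mulVec, dotProduct, Fin.sum_univ_three, jcocycle]

lemma mulVec_homCoords (g : Matrix (Fin 3) (Fin 3) ℂ) {τ : ℂ × ℂ} (hj : jcocycle g τ ≠ 0) :
    g *ᵥ homCoords τ = jcocycle g τ • homCoords (act g τ) := by
  ext i
  fin_cases i
  · simp [homCoords, act, mulVec, dotProduct, Fin.sum_univ_three, mul_div_cancel₀ _ hj]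
  · simp [homCoords, act, mulVec, dotProduct, Fin.sum_univ_three, mul_div_cancel₀ _ hj]
  · simpa [homCoords] using mulVec_homCoords_two g τ

lemma mem_upperH_iff {τ : ℂ × ℂ} : τ ∈ UpperH ↔ hermQ (homCoords τ) < 0 := by
  rw [hermQ_homCoords]; rfl

lemma jcocycle_ne_zero {g : Matrix (Fin 3) (Fin 3) ℂ} (hg : g ∈ SU21) {τ : ℂ × ℂ}
    (hτ : τ ∈ UpperH) : jcocycle g τ ≠ 0 := by
  intro hj
  have hQ := hermQ_mulVec hg (homCoords τ)
  rw [hermQ_eq (g *ᵥ _), mulVec_homCoords_two, hj, mul_zero, zero_re, mul_zero, zero_add] at hQ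
  exact (mem_upperH_iff.mp hτ).not_ge (hQ ▸ normSq_nonneg _)

lemma act_mem_upperH {g : Matrix (Fin 3) (Fin 3) ℂ} (hg : g ∈ SU21) {τ : ℂ × ℂ}
    (hτ : τ ∈ UpperH) : act g τ ∈ UpperH := by
  have hQ := hermQ_mulVec hg (homCoords τ)
  rw [mulVec_homCoords g (jcocycle_ne_zero hg hτ), hermQ_smul] at hQ
  rw [mem_upperH_iff] at hτ ⊢
  exact neg_of_mul_neg_right (hQ ▸ hτ) (normSq_nonneg _)

lemma τ0_mem_upperH : τ0 ∈ UpperH := by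
  norm_num [UpperH, τ0]

lemma sub_fst_mem_upperH {τ : ℂ × ℂ} (hτ : τ ∈ UpperH) {t : ℝ} (ht : 0 ≤ t) :
    (τ.1 - t, τ.2) ∈ UpperH := by
  simp only [UpperH, Set.mem_ofPred_eq, sub_re, ofReal_re] at hτ ⊢
  linarith

lemma jcocycle_sub_fst (g : Matrix (Fin 3) (Fin 3) ℂ) (τ : ℂ × ℂ) (t : ℂ) :
    jcocycle g (τ.1 - t, τ.2) = jcocycle g τ - t * g 2 0 := by
  simp only [jcocycle]; ring

lemma Xfun_ne_zero {g : Matrix (Fin 3) (Fin 3) ℂ} (hj : ∀ τ ∈ UpperH, jcocycle g τ ≠ 0) :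
    Xfun g ≠ 0 := by
  unfold Xfun
  split_ifs with hC
  · exact neg_ne_zero.mpr hC
  · simpa [jcocycle, τ0, not_not.mp hC] using hj τ0 τ0_mem_upperH

open scoped ComplexOrder in
lemma jcocycle_div_Xfun_mem_slitPlane {g : Matrix (Fin 3) (Fin 3) ℂ}
    (hj : ∀ τ ∈ UpperH, jcocycle g τ ≠ 0) {τ : ℂ × ℂ} (hτ : τ ∈ UpperH) :
    jcocycle g τ / Xfun g ∈ slitPlane := by
  by_cases hC : g 2 0 = 0
  · -- `j(g, ·)` is then an affine function of `τ.2` alone, which is unrestricted on `H`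
    have hD : g 2 1 = 0 := by
      by_contra hD
      set z := -g 2 2 / g 2 1
      refine hj (-normSq z - 1, z) ?_ ?_
      · simp only [UpperH, Set.mem_ofPred_eq]; norm_num; linarith [normSq_nonneg z]
      · simp [jcocycle, hC, z, mul_div_cancel₀ _ hD]
    have hX : Xfun g = jcocycle g τ := by simp [Xfun, jcocycle, hC, hD]
    rw [hX, div_self (hj τ hτ)]
    exact one_mem_slitPlane
  · -- if `j/X = -t ≤ 0`, then `j(g, ·)` vanishes at `(τ.1 - t, τ.2) ∈ H`
    rw [mem_slitPlane_iff_not_le_zero]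
    intro hz
    set t := (-(jcocycle g τ / Xfun g)).re
    have hz' : (0 : ℂ) ≤ -(jcocycle g τ / Xfun g) := neg_nonneg.mpr hz
    have ht : -(jcocycle g τ / Xfun g) = t := eq_re_of_ofReal_le (r := 0) (by simpa using hz')
    have hjt : jcocycle g τ = t * g 2 0 := by
      rw [← ht]; simp [Xfun, hC, div_neg]
    refine hj _ (sub_fst_mem_upperH hτ (t := t) ?_) ?_
    · exact (nonneg_iff.mp hz').1
    · rw [jcocycle_sub_fst, hjt, sub_self]

lemma convex_upperH : Convex ℝ UpperH := by
  have hlin : ConvexOn ℝ Set.univ (fun τ : ℂ × ℂ => 2 * τ.1.re) :=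
    ((2 : ℝ) • (reLm.comp (LinearMap.fst ℝ ℂ ℂ))).convexOn convex_univ
  have hsq : ConvexOn ℝ Set.univ (fun τ : ℂ × ℂ => normSq τ.2) := by
    simpa [Function.comp_def, normSq_eq_norm_sq] using
      ((convexOn_univ_norm (E := ℂ)).pow (fun z _ => norm_nonneg z) 2).comp_linearMap
        (LinearMap.snd ℝ ℂ ℂ)
  have := (hlin.add hsq).convex_lt 0
  simp only [Set.mem_univ, true_and, Pi.add_apply] at this
  exact this

lemma continuousOn_jtilde {g : Matrix (Fin 3) (Fin 3) ℂ} (hg : g ∈ SU21) :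
    ContinuousOn (jtilde g) UpperH := by
  refine ContinuousOn.add (ContinuousOn.clog ?_ fun τ hτ => ?_) continuousOn_const
  · unfold jcocycle; fun_prop
  · exact jcocycle_div_Xfun_mem_slitPlane (fun _ hσ => jcocycle_ne_zero hg hσ) hτ

lemma exp_jtilde {g : Matrix (Fin 3) (Fin 3) ℂ} (hg : g ∈ SU21) {τ : ℂ × ℂ}
    (hτ : τ ∈ UpperH) : exp (jtilde g τ) = jcocycle g τ := by
  have hX := Xfun_ne_zero fun _ hσ => jcocycle_ne_zero hg hσ
  rw [jtilde, exp_add, exp_log (div_ne_zero (jcocycle_ne_zero hg hτ) hX), exp_log hX,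
    div_mul_cancel₀ _ hX]

lemma jcocycle_mul (g h : Matrix (Fin 3) (Fin 3) ℂ) {τ : ℂ × ℂ} (hj : jcocycle h τ ≠ 0) :
    jcocycle (g * h) τ = jcocycle g (act h τ) * jcocycle h τ := by
  simp only [jcocycle, act, Matrix.mul_apply, Fin.sum_univ_three] at hj ⊢
  field_simp
  ring

lemma sigmaZ_eq_sigmaC {g h : Matrix (Fin 3) (Fin 3) ℂ} (hg : g ∈ SU21) (hh : h ∈ SU21)
    (hgh : g * h ∈ SU21) : (sigmaZ g h : ℂ) = sigmaC g h := by
  have hact := act_mem_upperH hh τ0_mem_upperH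
  obtain ⟨k, hk⟩ : ∃ k : ℤ, sigmaC g h = k := by
    refine exists_int_eq_of_exp_eq_one ?_
    rw [exp_sub, exp_sub, exp_jtilde hgh τ0_mem_upperH, exp_jtilde hg hact,
      exp_jtilde hh τ0_mem_upperH, jcocycle_mul g h (jcocycle_ne_zero hh τ0_mem_upperH),
      div_div, div_self (mul_ne_zero (jcocycle_ne_zero hg hact)
        (jcocycle_ne_zero hh τ0_mem_upperH))]
  simp [sigmaZ, hk]

lemma mul_exp_neg_jtilde_eq {g : Matrix (Fin 3) (Fin 3) ℂ} (hg : g ∈ SU21) {L : ℂ × ℂ → ℂ}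
    (hL : ContinuousOn L UpperH) {w c : ℂ} {a : ℤ} {b : ℕ} (hb : b ≠ 0) (hwb : w * b = a)
    (hpow : ∀ τ ∈ UpperH, L τ ^ b = c * jcocycle g τ ^ a) {τ τ' : ℂ × ℂ} (hτ : τ ∈ UpperH)
    (hτ' : τ' ∈ UpperH) : L τ * exp (-w * jtilde g τ) = L τ' * exp (-w * jtilde g τ') := by
  have hcont : ContinuousOn (fun σ => L σ * exp (-w * jtilde g σ)) UpperH :=
    hL.mul (continuousOn_const.mul (continuousOn_jtilde hg)).cexp
  refine convex_upperH.isPreconnected.eq_of_pow_eq_const hcont hb (c := c)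
    (fun σ hσ => ?_) hτ hτ'
  rw [mul_pow, hpow σ hσ, exp_mul_pow_eq_exp_zpow (a := -a) (by rw [neg_mul, hwb, Int.cast_neg]),
    exp_jtilde hg hσ, _root_.zpow_neg, mul_assoc,
    mul_inv_cancel₀ (zpow_ne_zero _ (jcocycle_ne_zero hg hσ)), mul_one]

lemma jcocycle_one (τ : ℂ × ℂ) : jcocycle 1 τ = 1 := by
  simp [jcocycle]

lemma act_one (τ : ℂ × ℂ) : act 1 τ = τ := by
  simp [act, jcocycle_one]

lemma jtilde_one (τ : ℂ × ℂ) : jtilde 1 τ = 0 := by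
  simp [jtilde, jcocycle_one, Xfun]

/-- Given a weight-`w` multiplier system `ℓ` on a subgroup `Γ` of `SU(2,1)`,
the function `Φ(g,n) = ℓ(g,τ)·exp(w(2πi·n − j̃(g,τ)))` is independent of
`τ ∈ H`, is a homomorphism for the twisted multiplication on `Γ̃`, and
satisfies `Φ(I₃,1) = e^{2πi w}`. -/
theorem multiplier_system_gives_character
    (Γ : Set (Matrix (Fin 3) (Fin 3) ℂ)) (hΓsub : Γ ⊆ SU21)
    (hΓone : (1 : Matrix (Fin 3) (Fin 3) ℂ) ∈ Γ)
    (hΓmul : ∀ g ∈ Γ, ∀ h ∈ Γ, g * h ∈ Γ)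
    (w : ℚ) (a : ℤ) (b : ℕ) (hb : b ≠ 0) (hw : w = (a : ℚ) / (b : ℚ))
    (ℓ : Matrix (Fin 3) (Fin 3) ℂ → (ℂ × ℂ) → ℂ)
    (hℓne : ∀ g ∈ Γ, ∀ τ ∈ UpperH, ℓ g τ ≠ 0)
    (hℓmul : ∀ g ∈ Γ, ∀ h ∈ Γ, ∀ τ ∈ UpperH,
      ℓ (g * h) τ = ℓ g (act h τ) * ℓ h τ)
    (χ : Matrix (Fin 3) (Fin 3) ℂ → ℂ)
    (hpow : ∀ g ∈ Γ, ∀ τ ∈ UpperH, ℓ g τ ^ b = χ g * jcocycle g τ ^ a)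
    (hcont : ∀ g ∈ Γ, ContinuousOn (ℓ g) UpperH) :
    let Φ : Matrix (Fin 3) (Fin 3) ℂ → ℤ → (ℂ × ℂ) → ℂ := fun g n τ =>
      ℓ g τ * Complex.exp ((w : ℂ) * (2 * Real.pi * Complex.I * n - jtilde g τ))
    (∀ g ∈ Γ, ∀ n : ℤ, ∀ τ ∈ UpperH, ∀ τ' ∈ UpperH, Φ g n τ = Φ g n τ') ∧
    (∀ g ∈ Γ, ∀ h ∈ Γ, ∀ n m : ℤ, ∀ τ ∈ UpperH,
      Φ (g * h) (n + m + sigmaZ g h) τ = Φ g n τ * Φ h m τ) ∧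
    (∀ τ ∈ UpperH, Φ 1 1 τ = Complex.exp (2 * Real.pi * Complex.I * (w : ℂ))) := by
  intro Φ
  have hwb : (w : ℂ) * b = a := by
    rw [hw]; push_cast; field_simp
  have hΦ : ∀ g n τ, Φ g n τ =
      ℓ g τ * exp (-w * jtilde g τ) * exp (w * (2 * Real.pi * I * n)) := by
    intro g n τ
    simp only [Φ, mul_assoc, ← exp_add]; ring_nf
  have hconst : ∀ g ∈ Γ, ∀ n : ℤ, ∀ τ ∈ UpperH, ∀ τ' ∈ UpperH, Φ g n τ = Φ g n τ' := by
    intro g hg n τ hτ τ' hτ'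
    rw [hΦ, hΦ, mul_exp_neg_jtilde_eq (hΓsub hg) (hcont g hg) hb hwb (hpow g hg) hτ hτ']
  refine ⟨hconst, fun g hg h hh n m τ hτ => ?_, fun τ hτ => ?_⟩
  · have hact := act_mem_upperH (hΓsub hh) τ0_mem_upperH
    have hσ : 2 * Real.pi * I * sigmaZ g h =
        jtilde (g * h) τ0 - jtilde g (act h τ0) - jtilde h τ0 := by
      rw [sigmaZ_eq_sigmaC (hΓsub hg) (hΓsub hh) (hΓsub (hΓmul g hg h hh)), sigmaC,
        mul_div_cancel₀ _ two_pi_I_ne_zero]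
    rw [hconst _ (hΓmul g hg h hh) _ τ hτ τ0 τ0_mem_upperH, hconst g hg n τ hτ _ hact,
      hconst h hh m τ hτ τ0 τ0_mem_upperH]
    simp only [Φ, hℓmul g hg h hh τ0 τ0_mem_upperH, mul_mul_mul_comm, ← exp_add]
    congr 2
    push_cast
    linear_combination (w : ℂ) * hσ
  · have hℓone : ℓ 1 τ = 1 := by
      have h := hℓmul 1 hΓone 1 hΓone τ hτ
      rw [one_mul, act_one] at h
      exact (mul_right_eq_self₀.mp h.symm).resolve_right (hℓne 1 hΓone τ hτ)
    simp only [Φ, hℓone, jtilde_one]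
    push_cast; ring_nf
end
end

section
/- Let ζ = e^{2πi/3}, Γ(1) = SU(2,1) ∩ SL₃(ℤ[ζ]), Γ(√−3) the subgroup of g ∈ Γ(1) with g ≡ I₃ mod √−3, Z = ⟨ζI₃⟩ the centre, and Υ = {(g_{ij}) ∈ Γ(√−3) : g_{11} ≡ 1 mod 3}. Then Υ is a subgroup of Γ(√−3), and Γ(√−3) is the internal direct product of Υ and Z: Γ(√−3) = Υ × Z, with Υ of index 3. -/
noncomputable section

open Matrix Complex

/-- The primitive cube root of unity `ζ = e^{2πi/3}`. -/
def zeta3 : ℂ := Complex.exp (2 * Real.pi * Complex.I / 3)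

/-- The ring `ℤ[ζ]` of Eisenstein integers, as a subset of `ℂ`. -/
def Eis : Set ℂ := {x | ∃ a b : ℤ, x = (a : ℂ) + (b : ℂ) * zeta3}

/-- The element `√−3 = 2ζ + 1 = ζ − ζ²`. -/
def sqrtm3 : ℂ := 2 * zeta3 + 1

/-- `Γ(1) = SU(2,1) ∩ SL₃(ℤ[ζ])`. -/
def Gamma1 : Set (Matrix (Fin 3) (Fin 3) ℂ) :=
  {g | g ∈ SU21 ∧ ∀ i j, g i j ∈ Eis}

/-- The principal congruence subgroup `Γ(√−3)`. -/
def GammaSqrt3 : Set (Matrix (Fin 3) (Fin 3) ℂ) :=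
  {g | g ∈ Gamma1 ∧ ∀ i j, ∃ t ∈ Eis,
    g i j - (1 : Matrix (Fin 3) (Fin 3) ℂ) i j = sqrtm3 * t}

/-- The subgroup `Υ = {g ∈ Γ(√−3) : g₁₁ ≡ 1 mod 3}`. -/
def Upsilon : Set (Matrix (Fin 3) (Fin 3) ℂ) :=
  {g | g ∈ GammaSqrt3 ∧ ∃ t ∈ Eis, g 0 0 - 1 = 3 * t}

/-- The centre `Z = ⟨ζ·I₃⟩` of `SU(2,1)`. -/
def Zcentre : Set (Matrix (Fin 3) (Fin 3) ℂ) :=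
  {(1 : Matrix (Fin 3) (Fin 3) ℂ), zeta3 • (1 : Matrix (Fin 3) (Fin 3) ℂ),
    zeta3 ^ 2 • (1 : Matrix (Fin 3) (Fin 3) ℂ)}

/-! The map `g ↦ g₁₁ mod 3` is multiplicative on `Γ(√−3)`: the off-diagonal entries are
divisible by `√−3` and `(√−3)² = −3`, so `(gh)₁₁ ≡ g₁₁ h₁₁ mod 3`. Hence `Υ`, its kernel, is a
subgroup. Every `x ≡ 1 mod √−3` in `ℤ[ζ]` is congruent mod 3 to one of `1, ζ, ζ²`, which are
pairwise incongruent mod 3; so for each `g ∈ Γ(√−3)` exactly one scalar `ζᵏ` puts `ζᵏ g` in `Υ`. -/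

lemma isPrimitiveRoot_zeta3 : IsPrimitiveRoot zeta3 3 := by
  simpa [zeta3] using Complex.isPrimitiveRoot_exp 3 (by norm_num)

lemma zeta3_pow_three : zeta3 ^ 3 = 1 := isPrimitiveRoot_zeta3.pow_eq_one

lemma zeta3_sq_add_zeta3_add_one : zeta3 ^ 2 + zeta3 + 1 = 0 := by
  linear_combination (by simpa [Finset.sum_range_succ] using
    isPrimitiveRoot_zeta3.geom_sum_eq_zero (by norm_num) : 1 + zeta3 + zeta3 ^ 2 = 0)

lemma zeta3_im_pos : 0 < zeta3.im := by
  have h : zeta3 = Complex.exp ((2 * Real.pi / 3 : ℝ) * Complex.I) := by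
    rw [zeta3]; push_cast; ring_nf
  rw [h, Complex.exp_ofReal_mul_I_im]
  exact Real.sin_pos_of_pos_of_lt_pi (by positivity) (by linarith [Real.pi_pos])

lemma zeta3_mul_conj_self : zeta3 * (starRingEnd ℂ) zeta3 = 1 := by
  rw [Complex.mul_conj, Complex.normSq_eq_norm_sq,
    isPrimitiveRoot_zeta3.norm'_eq_one (by norm_num)]
  simp

lemma sqrtm3_mul_self : sqrtm3 * sqrtm3 = -3 := by
  rw [sqrtm3]; linear_combination 4 * zeta3_sq_add_zeta3_add_one

lemma zeta3_sub_one : zeta3 - 1 = sqrtm3 * (1 + zeta3) := by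
  rw [sqrtm3]; linear_combination (-2 : ℂ) * zeta3_sq_add_zeta3_add_one

lemma intCast_add_intCast_mul_zeta3_inj {a b c d : ℤ}
    (h : (a : ℂ) + b * zeta3 = c + d * zeta3) : a = c ∧ b = d := by
  have hbd : b = d := by
    have him := congrArg Complex.im h
    simp only [Complex.add_im, Complex.mul_im, Complex.intCast_re, Complex.intCast_im,
      zero_mul, add_zero, zero_add] at him
    exact_mod_cast mul_right_cancel₀ zeta3_im_pos.ne' him
  subst hbd
  exact ⟨by exact_mod_cast add_right_cancel h, rfl⟩

def eisenstein : Subring ℂ where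
  carrier := Eis
  mul_mem' := by
    rintro _ _ ⟨a, b, rfl⟩ ⟨c, d, rfl⟩
    refine ⟨a * c - b * d, a * d + b * c - b * d, ?_⟩
    push_cast
    linear_combination (b : ℂ) * d * zeta3_sq_add_zeta3_add_one
  one_mem' := ⟨1, 0, by simp⟩
  add_mem' := by
    rintro _ _ ⟨a, b, rfl⟩ ⟨c, d, rfl⟩
    exact ⟨a + c, b + d, by push_cast; ring⟩
  zero_mem' := ⟨0, 0, by simp⟩
  neg_mem' := by
    rintro _ ⟨a, b, rfl⟩
    exact ⟨-a, -b, by push_cast; ring⟩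

lemma zeta3_mem_eisenstein : zeta3 ∈ eisenstein := ⟨0, 1, by simp⟩

/-- `x - y ∈ eisMultiples d` is the congruence `x ≡ y mod d` in `ℤ[ζ]`. -/
def eisMultiples (d : ℂ) : AddSubgroup ℂ where
  carrier := {x | ∃ t ∈ eisenstein, x = d * t}
  add_mem' := by
    rintro _ _ ⟨s, hs, rfl⟩ ⟨t, ht, rfl⟩
    exact ⟨s + t, add_mem hs ht, by ring⟩
  zero_mem' := ⟨0, zero_mem eisenstein, by ring⟩
  neg_mem' := by
    rintro _ ⟨t, ht, rfl⟩
    exact ⟨-t, neg_mem ht, by ring⟩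

lemma mul_mem_eisMultiples_self {d t : ℂ} (ht : t ∈ eisenstein) : d * t ∈ eisMultiples d :=
  ⟨t, ht, rfl⟩

lemma mul_mem_eisMultiples {d r x : ℂ} (hr : r ∈ eisenstein) (hx : x ∈ eisMultiples d) :
    r * x ∈ eisMultiples d := by
  obtain ⟨t, ht, rfl⟩ := hx
  exact ⟨r * t, mul_mem hr ht, by ring⟩

lemma mul_mem_eisMultiples_three {x y : ℂ} (hx : x ∈ eisMultiples sqrtm3)
    (hy : y ∈ eisMultiples sqrtm3) : x * y ∈ eisMultiples 3 := by
  obtain ⟨s, hs, rfl⟩ := hx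
  obtain ⟨t, ht, rfl⟩ := hy
  exact ⟨-(s * t), neg_mem (mul_mem hs ht), by linear_combination s * t * sqrtm3_mul_self⟩

lemma intCast_add_intCast_mul_zeta3_mem_eisMultiples_three_iff (a b : ℤ) :
    (a : ℂ) + b * zeta3 ∈ eisMultiples 3 ↔ 3 ∣ a ∧ 3 ∣ b := by
  constructor
  · rintro ⟨_, ⟨c, d, rfl⟩, h⟩
    obtain ⟨hc, hd⟩ := intCast_add_intCast_mul_zeta3_inj (a := a) (b := b) (c := 3 * c)
      (d := 3 * d) (by push_cast; linear_combination h)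
    exact ⟨⟨c, hc⟩, ⟨d, hd⟩⟩
  · rintro ⟨⟨c, rfl⟩, ⟨d, rfl⟩⟩
    exact ⟨c + d * zeta3, ⟨c, d, rfl⟩, by push_cast; ring⟩

lemma Subring.adjugate_apply_mem {n A : Type*} [Fintype n] [DecidableEq n] [CommRing A]
    (S : Subring A) {M : Matrix n n A} (hM : ∀ i j, M i j ∈ S) (i j : n) :
    M.adjugate i j ∈ S := by
  let M' : Matrix n n S := Matrix.of fun i j => ⟨M i j, hM i j⟩
  have hM' : M = S.subtype.mapMatrix M' := rfl
  rw [hM', ← RingHom.map_adjugate]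
  exact (M'.adjugate i j).2

lemma mul_apply_mem_eisMultiples {l m n : Type*} [Fintype m] {d : ℂ} {A : Matrix l m ℂ}
    {B : Matrix m n ℂ} (hA : ∀ i j, A i j ∈ eisenstein) (hB : ∀ i j, B i j ∈ eisMultiples d)
    (i : l) (j : n) : (A * B) i j ∈ eisMultiples d :=
  sum_mem fun k _ => mul_mem_eisMultiples (hA i k) (hB k j)

section

variable {g h : Matrix (Fin 3) (Fin 3) ℂ}

lemma mem_Gamma1_iff : g ∈ Gamma1 ↔ g ∈ SU21 ∧ ∀ i j, g i j ∈ eisenstein := Iff.rfl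

lemma mem_GammaSqrt3_iff :
    g ∈ GammaSqrt3 ↔ g ∈ Gamma1 ∧ ∀ i j, (g - 1) i j ∈ eisMultiples sqrtm3 := Iff.rfl

lemma mem_Upsilon_iff : g ∈ Upsilon ↔ g ∈ GammaSqrt3 ∧ g 0 0 - 1 ∈ eisMultiples 3 := Iff.rfl

lemma isUnit_det_of_mem_SU21 (hg : g ∈ SU21) : IsUnit g.det := hg.1 ▸ isUnit_one

lemma mul_mem_SU21 (hg : g ∈ SU21) (hh : h ∈ SU21) : g * h ∈ SU21 := by
  refine ⟨by rw [det_mul, hg.1, hh.1, mul_one], ?_⟩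
  calc (g * h)ᴴ * Jmat * (g * h) = hᴴ * (gᴴ * Jmat * g) * h := by
        simp only [conjTranspose_mul, Matrix.mul_assoc]
    _ = Jmat := by rw [hg.2, hh.2]

lemma inv_mem_SU21 (hg : g ∈ SU21) : g⁻¹ ∈ SU21 := by
  refine ⟨by rw [det_nonsing_inv, hg.1, Ring.inverse_one], ?_⟩
  have hgg : g * g⁻¹ = 1 := mul_nonsing_inv g (isUnit_det_of_mem_SU21 hg)
  calc g⁻¹ᴴ * Jmat * g⁻¹ = g⁻¹ᴴ * (gᴴ * Jmat * g) * g⁻¹ := by rw [hg.2]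
    _ = (g * g⁻¹)ᴴ * Jmat * (g * g⁻¹) := by simp only [conjTranspose_mul, Matrix.mul_assoc]
    _ = Jmat := by rw [hgg, conjTranspose_one, Matrix.one_mul, Matrix.mul_one]

lemma mul_mem_Gamma1 (hg : g ∈ Gamma1) (hh : h ∈ Gamma1) : g * h ∈ Gamma1 :=
  mem_Gamma1_iff.2
    ⟨mul_mem_SU21 hg.1 hh.1, fun i j => by
      rw [mul_apply]; exact sum_mem fun k _ => mul_mem (hg.2 i k) (hh.2 k j)⟩

lemma inv_mem_Gamma1 (hg : g ∈ Gamma1) : g⁻¹ ∈ Gamma1 := by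
  refine mem_Gamma1_iff.2 ⟨inv_mem_SU21 hg.1, ?_⟩
  have hinv : g⁻¹ = g.adjugate := by rw [Matrix.inv_def, hg.1.1, Ring.inverse_one, one_smul]
  exact hinv ▸ eisenstein.adjugate_apply_mem hg.2

lemma mul_mem_GammaSqrt3 (hg : g ∈ GammaSqrt3) (hh : h ∈ GammaSqrt3) : g * h ∈ GammaSqrt3 := by
  refine mem_GammaSqrt3_iff.2 ⟨mul_mem_Gamma1 hg.1 hh.1, fun i j => ?_⟩
  rw [show g * h - 1 = g * (h - 1) + (g - 1) by
    rw [Matrix.mul_sub, Matrix.mul_one, sub_add_sub_cancel]]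
  exact add_mem (mul_apply_mem_eisMultiples hg.1.2 hh.2 i j) (hg.2 i j)

lemma inv_mem_GammaSqrt3 (hg : g ∈ GammaSqrt3) : g⁻¹ ∈ GammaSqrt3 := by
  have hg₁ := inv_mem_Gamma1 hg.1
  refine mem_GammaSqrt3_iff.2 ⟨hg₁, fun i j => ?_⟩
  rw [show g⁻¹ - 1 = -(g⁻¹ * (g - 1)) by
    rw [Matrix.mul_sub, nonsing_inv_mul _ (isUnit_det_of_mem_SU21 hg.1.1),
      Matrix.mul_one, neg_sub]]
  exact neg_mem (mul_apply_mem_eisMultiples hg₁.2 hg.2 i j)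

lemma zeta3_pow_sub_one_mem (k : ℕ) : zeta3 ^ k - 1 ∈ eisMultiples sqrtm3 := by
  rw [← geom_sum_mul, zeta3_sub_one]
  exact mul_mem_eisMultiples (sum_mem fun i _ => pow_mem zeta3_mem_eisenstein i)
    (mul_mem_eisMultiples_self (add_mem (one_mem _) zeta3_mem_eisenstein))

lemma zeta3_pow_smul_one_mem_GammaSqrt3 (k : ℕ) :
    zeta3 ^ k • (1 : Matrix (Fin 3) (Fin 3) ℂ) ∈ GammaSqrt3 := by
  have hc : zeta3 ^ k ∈ eisenstein := pow_mem zeta3_mem_eisenstein k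
  have h1 (i j : Fin 3) : (1 : Matrix (Fin 3) (Fin 3) ℂ) i j ∈ eisenstein := by
    rw [one_apply]; split_ifs; exacts [one_mem _, zero_mem _]
  refine mem_GammaSqrt3_iff.2 ⟨mem_Gamma1_iff.2 ⟨⟨?_, ?_⟩, fun i j => ?_⟩, fun i j => ?_⟩
  · rw [det_smul, det_one, Fintype.card_fin, mul_one, ← pow_mul, pow_mul', zeta3_pow_three,
      one_pow]
  · rw [conjTranspose_smul, conjTranspose_one, Matrix.smul_mul, Matrix.one_mul, Matrix.mul_smul,
      Matrix.mul_one, smul_smul, star_pow, ← mul_pow, Complex.star_def, zeta3_mul_conj_self,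
      one_pow, one_smul]
  · exact mul_mem hc (h1 i j)
  · rw [Matrix.sub_apply, Matrix.smul_apply, smul_eq_mul, ← sub_one_mul, mul_comm]
    exact mul_mem_eisMultiples (h1 i j) (zeta3_pow_sub_one_mem k)

lemma one_mem_GammaSqrt3 : (1 : Matrix (Fin 3) (Fin 3) ℂ) ∈ GammaSqrt3 := by
  simpa using zeta3_pow_smul_one_mem_GammaSqrt3 0

lemma GammaSqrt3_apply_mem_of_ne (hg : g ∈ GammaSqrt3) {i j : Fin 3} (hij : i ≠ j) :
    g i j ∈ eisMultiples sqrtm3 := by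
  simpa [one_apply_ne hij] using (mem_GammaSqrt3_iff.1 hg).2 i j

lemma mul_apply_zero_zero_sub_mem (hg : g ∈ GammaSqrt3) (hh : h ∈ GammaSqrt3) :
    (g * h) 0 0 - g 0 0 * h 0 0 ∈ eisMultiples 3 := by
  rw [mul_apply, Fin.sum_univ_three, add_assoc, add_sub_cancel_left]
  exact add_mem
    (mul_mem_eisMultiples_three (GammaSqrt3_apply_mem_of_ne hg (by decide))
      (GammaSqrt3_apply_mem_of_ne hh (by decide)))
    (mul_mem_eisMultiples_three (GammaSqrt3_apply_mem_of_ne hg (by decide))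
      (GammaSqrt3_apply_mem_of_ne hh (by decide)))

lemma one_mem_Upsilon : (1 : Matrix (Fin 3) (Fin 3) ℂ) ∈ Upsilon :=
  mem_Upsilon_iff.2 ⟨one_mem_GammaSqrt3, by simp⟩

lemma mul_mem_Upsilon (hg : g ∈ Upsilon) (hh : h ∈ Upsilon) : g * h ∈ Upsilon := by
  refine mem_Upsilon_iff.2 ⟨mul_mem_GammaSqrt3 hg.1 hh.1, ?_⟩
  rw [show (g * h) 0 0 - 1 = ((g * h) 0 0 - g 0 0 * h 0 0) + h 0 0 * (g 0 0 - 1) + (h 0 0 - 1) by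
    ring]
  exact add_mem (add_mem (mul_apply_zero_zero_sub_mem hg.1 hh.1)
    (mul_mem_eisMultiples (hh.1.1.2 0 0) hg.2)) hh.2

lemma inv_mem_Upsilon (hg : g ∈ Upsilon) : g⁻¹ ∈ Upsilon := by
  have hg' := inv_mem_GammaSqrt3 hg.1
  refine mem_Upsilon_iff.2 ⟨hg', ?_⟩
  have hinv : (g⁻¹ * g) 0 0 = 1 := by
    rw [nonsing_inv_mul _ (isUnit_det_of_mem_SU21 hg.1.1.1), one_apply_eq]
  rw [show g⁻¹ 0 0 - 1 = -((g⁻¹ * g) 0 0 - g⁻¹ 0 0 * g 0 0) - g⁻¹ 0 0 * (g 0 0 - 1) by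
    rw [hinv]; ring]
  exact sub_mem (neg_mem (mul_apply_zero_zero_sub_mem hg' hg.1))
    (mul_mem_eisMultiples (hg'.1.2 0 0) hg.2)

end

lemma exists_zeta3_pow_mul_sub_one_mem {x : ℂ} (hx : x - 1 ∈ eisMultiples sqrtm3) :
    ∃ k : ℕ, zeta3 ^ k * x - 1 ∈ eisMultiples 3 := by
  obtain ⟨_, ⟨a, b, rfl⟩, hx⟩ := hx
  rw [sqrtm3] at hx
  -- `x = (1 + a - 2b) + (2a - b)ζ`, so `ζᵏ x ≡ 1 mod 3` exactly when `k ≡ a + b mod 3`.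
  have mem (k : ℕ) (p q : ℤ) (hpq : zeta3 ^ k * x - 1 = p + q * zeta3) (hp : 3 ∣ p)
      (hq : 3 ∣ q) : ∃ k : ℕ, zeta3 ^ k * x - 1 ∈ eisMultiples 3 :=
    ⟨k, hpq ▸ (intCast_add_intCast_mul_zeta3_mem_eisMultiples_three_iff p q).2 ⟨hp, hq⟩⟩
  have hζ := zeta3_sq_add_zeta3_add_one
  rcases (by omega : (a + b) % 3 = 0 ∨ (a + b) % 3 = 1 ∨ (a + b) % 3 = 2) with h | h | h
  · exact mem 0 (a - 2 * b) (2 * a - b) (by push_cast; linear_combination hx + 2 * b * hζ)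
      (by omega) (by omega)
  · exact mem 1 (b - 2 * a - 1) (1 - a - b)
      (by push_cast; linear_combination zeta3 * hx + (2 * a - b + 2 * b * zeta3) * hζ)
      (by omega) (by omega)
  · exact mem 2 (a + b - 2) (2 * b - a - 1)
      (by push_cast; linear_combination zeta3 ^ 2 * hx +
        (2 * b * zeta3 ^ 2 + (2 * a - b) * zeta3 + 1 - a - b) * hζ) (by omega) (by omega)

lemma zeta3_pow_eq_one_of_sub_one_mem {k : ℕ} (h : zeta3 ^ k - 1 ∈ eisMultiples 3) :
    zeta3 ^ k = 1 := by
  rw [← Nat.mod_add_div k 3, pow_add, pow_mul, zeta3_pow_three, one_pow, mul_one] at h ⊢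
  have hk : k % 3 < 3 := Nat.mod_lt _ (by norm_num)
  interval_cases k % 3
  · exact pow_zero _
  · have := (intCast_add_intCast_mul_zeta3_mem_eisMultiples_three_iff (-1) 1).1
      (by push_cast; convert h using 1; ring)
    omega
  · have := (intCast_add_intCast_mul_zeta3_mem_eisMultiples_three_iff (-2) (-1)).1
      (by push_cast; convert h using 1; linear_combination -zeta3_sq_add_zeta3_add_one)
    omega

lemma zeta3_pow_eq_of_sub_mem {k l : ℕ} (h : zeta3 ^ k - zeta3 ^ l ∈ eisMultiples 3) :
    zeta3 ^ k = zeta3 ^ l := by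
  have h3l : (zeta3 ^ 3) ^ l = 1 := by rw [zeta3_pow_three, one_pow]
  -- multiply by `ζ^(2l) = ζ^(-l)`
  have h1 : zeta3 ^ (k + 2 * l) = 1 := by
    refine zeta3_pow_eq_one_of_sub_one_mem ?_
    rw [show zeta3 ^ (k + 2 * l) - 1 = zeta3 ^ (2 * l) * (zeta3 ^ k - zeta3 ^ l) by
      linear_combination h3l]
    exact mul_mem_eisMultiples (pow_mem zeta3_mem_eisenstein _) h
  linear_combination zeta3 ^ l * h1 - zeta3 ^ k * h3l

lemma mem_Zcentre_iff {z : Matrix (Fin 3) (Fin 3) ℂ} :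
    z ∈ Zcentre ↔ ∃ k : ℕ, z = zeta3 ^ k • 1 := by
  constructor
  · rintro (rfl | rfl | rfl)
    exacts [⟨0, by simp⟩, ⟨1, by simp⟩, ⟨2, rfl⟩]
  · rintro ⟨k, rfl⟩
    rw [← Nat.mod_add_div k 3, pow_add, pow_mul, zeta3_pow_three, one_pow, mul_one]
    have hk : k % 3 < 3 := Nat.mod_lt _ (by norm_num)
    interval_cases k % 3 <;> simp [Zcentre]

section

variable {g u u' z z' : Matrix (Fin 3) (Fin 3) ℂ}

lemma exists_mem_Upsilon_mul_mem_Zcentre (hg : g ∈ GammaSqrt3) :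
    ∃ u ∈ Upsilon, ∃ z ∈ Zcentre, g = u * z := by
  obtain ⟨k, hk⟩ :=
    exists_zeta3_pow_mul_sub_one_mem (by simpa using (mem_GammaSqrt3_iff.1 hg).2 0 0)
  refine ⟨zeta3 ^ k • g, mem_Upsilon_iff.2 ⟨?_, ?_⟩, zeta3 ^ (2 * k) • 1,
    mem_Zcentre_iff.2 ⟨_, rfl⟩, ?_⟩
  · simpa using mul_mem_GammaSqrt3 hg (zeta3_pow_smul_one_mem_GammaSqrt3 k)
  · simpa using hk
  · rw [Matrix.mul_smul, Matrix.mul_one, smul_smul, ← pow_add,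
      show 2 * k + k = 3 * k by ring, pow_mul, zeta3_pow_three, one_pow, one_smul]

lemma eq_of_mul_eq_mul_of_mem_Upsilon (hu : u ∈ Upsilon) (hz : z ∈ Zcentre)
    (hu' : u' ∈ Upsilon) (hz' : z' ∈ Zcentre) (h : u * z = u' * z') : u = u' ∧ z = z' := by
  obtain ⟨k, rfl⟩ := mem_Zcentre_iff.1 hz
  obtain ⟨l, rfl⟩ := mem_Zcentre_iff.1 hz'
  simp only [Matrix.mul_smul, Matrix.mul_one] at h
  have h00 : zeta3 ^ k * u 0 0 = zeta3 ^ l * u' 0 0 := by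
    simpa using congrFun (congrFun h 0) 0
  have hkl : zeta3 ^ k = zeta3 ^ l := by
    refine zeta3_pow_eq_of_sub_mem ?_
    rw [show zeta3 ^ k - zeta3 ^ l = zeta3 ^ l * (u' 0 0 - 1) - zeta3 ^ k * (u 0 0 - 1) by
      linear_combination h00]
    exact sub_mem (mul_mem_eisMultiples (pow_mem zeta3_mem_eisenstein l) hu'.2)
      (mul_mem_eisMultiples (pow_mem zeta3_mem_eisenstein k) hu.2)
  rw [hkl] at h ⊢
  exact ⟨smul_right_injective _ (pow_ne_zero l (isPrimitiveRoot_zeta3.ne_zero (by norm_num))) h,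
    rfl⟩

end

/-- `Υ` is a subgroup of `Γ(√−3)` and `Γ(√−3)` is the internal direct product
`Υ × Z`: every element of `Γ(√−3)` is uniquely a product of an element of `Υ`
and an element of `Z`. -/
theorem GammaSqrt3_internal_direct_product :
    ((1 : Matrix (Fin 3) (Fin 3) ℂ) ∈ Upsilon) ∧
    (∀ g ∈ Upsilon, ∀ h ∈ Upsilon, g * h ∈ Upsilon) ∧
    (∀ g ∈ Upsilon, g⁻¹ ∈ Upsilon) ∧
    (Upsilon ⊆ GammaSqrt3) ∧
    (∀ g ∈ GammaSqrt3,
      ∃! p : Matrix (Fin 3) (Fin 3) ℂ × Matrix (Fin 3) (Fin 3) ℂ,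
        p.1 ∈ Upsilon ∧ p.2 ∈ Zcentre ∧ g = p.1 * p.2) := by
  refine ⟨one_mem_Upsilon, fun g hg h hh => mul_mem_Upsilon hg hh, fun g hg => inv_mem_Upsilon hg,
    fun g hg => hg.1, fun g hg => ?_⟩
  obtain ⟨u, hu, z, hz, rfl⟩ := exists_mem_Upsilon_mul_mem_Zcentre hg
  refine ⟨(u, z), ⟨hu, hz, rfl⟩, ?_⟩
  rintro ⟨u', z'⟩ ⟨hu', hz', h⟩
  obtain ⟨rfl, rfl⟩ := eq_of_mul_eq_mul_of_mem_Upsilon hu' hz' hu hz h.symm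
  rfl
end
end

section
/- For g ∈ Υ with first column (a, b, c)ᵗ, define H(g) = N(a) + N(c), where N is the norm from ℚ(ζ) to ℚ. Then H(g) ≥ 1, and if H(g) = 1 then a = 1, b = c = 0, and g is upper triangular of the form n(z,x) = [[1, √−3 z, (−3N(z)+x√−3)/2],[0, 1, √−3 z̄],[0, 0, 1]] for some z ∈ ℤ[ζ] and x ∈ ℤ with x ≡ N(z) mod 2. -/
noncomputable section

open Matrix Complex

/-- The upper triangular matrices `n(z,x)`. -/
def nmat (z : ℂ) (x : ℤ) : Matrix (Fin 3) (Fin 3) ℂ :=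
  !![1, sqrtm3 * z, (-3 * (Complex.normSq z : ℂ) + (x : ℂ) * sqrtm3) / 2;
     0, 1, sqrtm3 * (starRingEnd ℂ) z;
     0, 0, 1]


-- Auxiliary lemmas
lemma zeta3_re : zeta3.re = -(1/2) := by
  have h : (2 * Real.pi * Complex.I / 3) = ((2*Real.pi/3 : ℝ) : ℂ) * Complex.I := by push_cast; ring
  rw [zeta3, h, Complex.exp_ofReal_mul_I_re]
  have h2 : (2*Real.pi/3 : ℝ) = Real.pi - Real.pi/3 := by ring
  rw [h2, Real.cos_pi_sub, Real.cos_pi_div_three]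

lemma zeta3_im : zeta3.im = Real.sqrt 3 / 2 := by
  have h : (2 * Real.pi * Complex.I / 3) = ((2*Real.pi/3 : ℝ) : ℂ) * Complex.I := by push_cast; ring
  rw [zeta3, h, Complex.exp_ofReal_mul_I_im]
  have h2 : (2*Real.pi/3 : ℝ) = Real.pi - Real.pi/3 := by ring
  rw [h2, Real.sin_pi_sub, Real.sin_pi_div_three]

lemma sqrtm3_re : sqrtm3.re = 0 := by simp [sqrtm3, zeta3_re]

lemma sqrtm3_im : sqrtm3.im = Real.sqrt 3 := by simp [sqrtm3, zeta3_im]; ring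

lemma sq3 : Real.sqrt 3 * Real.sqrt 3 = 3 := Real.mul_self_sqrt (by norm_num)

lemma eis_re (m n : ℤ) : ((m:ℂ) + n*zeta3).re = m - n/2 := by
  simp [Complex.add_re, Complex.mul_re, zeta3_re, zeta3_im]; ring

lemma eis_im (m n : ℤ) : ((m:ℂ) + n*zeta3).im = n * (Real.sqrt 3/2) := by
  simp [Complex.add_im, Complex.mul_im, zeta3_re, zeta3_im]

lemma eis_normSq (m n : ℤ) :
    Complex.normSq ((m:ℂ)+n*zeta3) = ((m^2 - m*n + n^2 : ℤ) : ℝ) := by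
  rw [Complex.normSq_apply, eis_re, eis_im]
  push_cast
  nlinarith [sq3]

lemma conj_sqrtm3 : (starRingEnd ℂ) sqrtm3 = -sqrtm3 := by
  apply Complex.ext <;> simp [sqrtm3_re, sqrtm3_im]

lemma normSq_sqrtm3 : Complex.normSq sqrtm3 = 3 := by
  rw [Complex.normSq_apply, sqrtm3_re, sqrtm3_im]; nlinarith [sq3]

lemma eis_pos (m n : ℤ) (hm : m ≠ 0) : 1 ≤ m^2 - m*n + n^2 := by
  have key : 0 < (2*m - n)^2 + 3*n^2 := by
    rcases eq_or_ne n 0 with rfl | hn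
    · have h : (2*m - 0)^2 = 4 * m^2 := by ring
      rw [h]; positivity
    · positivity
  have hQ : 0 < m^2 - m*n + n^2 := by linarith
  exact hQ

/-- For `g ∈ Υ` with first column `(a,b,c)ᵗ`, the quantity `H(g)=N(a)+N(c)`
satisfies `H(g) ≥ 1`; and if `H(g) = 1` then `a = 1`, `b = c = 0` and
`g = n(z,x)` for some `z ∈ ℤ[ζ]`, `x ∈ ℤ` with `x ≡ N(z) mod 2`. -/
theorem height_ge_one_and_eq_one_case
    (g : Matrix (Fin 3) (Fin 3) ℂ) (hg : g ∈ Upsilon) :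
    1 ≤ Complex.normSq (g 0 0) + Complex.normSq (g 2 0) ∧
    (Complex.normSq (g 0 0) + Complex.normSq (g 2 0) = 1 →
      g 0 0 = 1 ∧ g 1 0 = 0 ∧ g 2 0 = 0 ∧
      ∃ z ∈ Eis, ∃ x : ℤ, (∃ k : ℤ, (x : ℝ) = Complex.normSq z + 2 * k) ∧
        g = nmat z x) := by
  obtain ⟨⟨⟨⟨hdet, hJ⟩, hEis⟩, hcong⟩, t, ⟨tm, tn, rfl⟩, ha⟩ := hg
  -- first column congruences
  obtain ⟨v, ⟨vm, vn, rfl⟩, hc⟩ := hcong 2 0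
  simp only [Matrix.one_apply_ne (by decide : (2:Fin 3) ≠ 0), sub_zero] at hc
  have ha' : g 0 0 = ((1+3*tm : ℤ):ℂ) + ((3*tn:ℤ):ℂ)*zeta3 := by
    push_cast; linear_combination ha
  have hNa : Complex.normSq (g 0 0)
      = (((1+3*tm)^2 - (1+3*tm)*(3*tn) + (3*tn)^2 : ℤ) : ℝ) := by
    rw [ha', eis_normSq]
  have hNc : Complex.normSq (g 2 0) = 3 * ((vm^2 - vm*vn + vn^2 : ℤ) : ℝ) := by
    rw [hc, Complex.normSq_mul, normSq_sqrtm3, eis_normSq]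
  have hA1 : (1:ℤ) ≤ (1+3*tm)^2 - (1+3*tm)*(3*tn) + (3*tn)^2 :=
    eis_pos _ _ (by omega)
  have hC0 : (0:ℤ) ≤ vm^2 - vm*vn + vn^2 := by nlinarith [sq_nonneg (2*vm-vn), sq_nonneg vn]
  constructor
  · rw [hNa, hNc]
    have h : (1:ℤ) ≤ ((1+3*tm)^2 - (1+3*tm)*(3*tn) + (3*tn)^2) + 3*(vm^2 - vm*vn + vn^2) := by
      linarith
    exact_mod_cast h
  · intro hH
    rw [hNa, hNc] at hH
    have hZ : ((1+3*tm)^2 - (1+3*tm)*(3*tn) + (3*tn)^2) + 3*(vm^2 - vm*vn + vn^2) = 1 := by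
      exact_mod_cast hH
    have hC : vm^2 - vm*vn + vn^2 = 0 := by linarith
    have hA : (1+3*tm)^2 - (1+3*tm)*(3*tn) + (3*tn)^2 = 1 := by linarith
    -- solve for vm, vn
    have h4c : (2*vm - vn)^2 + 3*vn^2 = 0 := by linear_combination 4*hC
    have hvn2 : vn^2 = 0 := by nlinarith [sq_nonneg (2*vm-vn), sq_nonneg vn]
    have hvn : vn = 0 := by nlinarith [sq_nonneg vn, sq_nonneg (vn-1), sq_nonneg (vn+1)]
    have hvm : vm = 0 := by nlinarith [sq_nonneg (vm-1), sq_nonneg (vm+1)]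
    subst hvn hvm
    have hc0 : g 2 0 = 0 := by rw [hc]; push_cast; ring
    -- solve for tm, tn
    have h27 : 27 * tn^2 ≤ 4 := by nlinarith [sq_nonneg (2*(1+3*tm)-3*tn)]
    have htn : tn = 0 := by nlinarith [sq_nonneg (tn-1), sq_nonneg (tn+1)]
    have htm : tm = 0 := by subst htn; nlinarith [sq_nonneg (tm-1), sq_nonneg (tm+1)]
    subst htn htm
    have h00 : g 0 0 = 1 := by rw [ha']; push_cast; ring
    -- b = 0 from the (0,0) relation
    have hJ00 : (starRingEnd ℂ) (g 0 0) * g 2 0 + (starRingEnd ℂ) (g 1 0) * g 1 0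
        + (starRingEnd ℂ) (g 2 0) * g 0 0 = 0 := by
      have h := congrFun (congrFun hJ 0) 0
      simp [Matrix.mul_apply, Fin.sum_univ_three, Jmat, Matrix.conjTranspose_apply] at h
      linear_combination h
    rw [h00, hc0] at hJ00
    simp only [_root_.map_one, one_mul, mul_zero, mul_one, _root_.map_zero, zero_mul, add_zero, zero_add] at hJ00
    have h10 : g 1 0 = 0 := by
      rcases mul_eq_zero.mp hJ00 with h | h
      · simpa using h
      · exact h
    refine ⟨h00, h10, hc0, ?_⟩
    -- remaining entries
    have hJ01 : (starRingEnd ℂ) (g 0 0) * g 2 1 + (starRingEnd ℂ) (g 1 0) * g 1 1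
        + (starRingEnd ℂ) (g 2 0) * g 0 1 = 0 := by
      have h := congrFun (congrFun hJ 0) 1
      simp [Matrix.mul_apply, Fin.sum_univ_three, Jmat, Matrix.conjTranspose_apply] at h
      linear_combination h
    have h21 : g 2 1 = 0 := by
      rw [h00, h10, hc0] at hJ01
      simpa using hJ01
    have hJ02 : (starRingEnd ℂ) (g 0 0) * g 2 2 + (starRingEnd ℂ) (g 1 0) * g 1 2
        + (starRingEnd ℂ) (g 2 0) * g 0 2 = 1 := by
      have h := congrFun (congrFun hJ 0) 2
      simp [Matrix.mul_apply, Fin.sum_univ_three, Jmat, Matrix.conjTranspose_apply] at h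
      linear_combination h
    have h22 : g 2 2 = 1 := by
      rw [h00, h10, hc0] at hJ02
      simpa using hJ02
    have h11 : g 1 1 = 1 := by
      rw [Matrix.det_fin_three] at hdet
      rw [h00, h10, hc0, h21, h22] at hdet
      linear_combination hdet
    -- g 0 1 = sqrtm3 * z
    obtain ⟨z, hzEis, hz⟩ := hcong 0 1
    simp only [Matrix.one_apply_ne (by decide : (0:Fin 3) ≠ 1), sub_zero] at hz
    obtain ⟨zm, zn, rfl⟩ := hzEis
    -- g 1 2 = sqrtm3 * conj z
    have hJ12 : (starRingEnd ℂ) (g 0 1) * g 2 2 + (starRingEnd ℂ) (g 1 1) * g 1 2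
        + (starRingEnd ℂ) (g 2 1) * g 0 2 = 0 := by
      have h := congrFun (congrFun hJ 1) 2
      simp [Matrix.mul_apply, Fin.sum_univ_three, Jmat, Matrix.conjTranspose_apply] at h
      linear_combination h
    rw [h11, h21, h22, hz] at hJ12
    have h12 : g 1 2 = sqrtm3 * (starRingEnd ℂ) ((zm:ℂ) + zn*zeta3) := by
      have hcj : (starRingEnd ℂ) (sqrtm3 * ((zm:ℂ) + zn*zeta3))
          = -(sqrtm3 * (starRingEnd ℂ) ((zm:ℂ) + zn*zeta3)) := by
        rw [_root_.map_mul, conj_sqrtm3]; ring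
      rw [hcj] at hJ12
      simp only [_root_.map_one, one_mul, mul_one, _root_.map_zero, zero_mul, add_zero] at hJ12
      linear_combination hJ12
    -- the (2,2) relation
    have hJ22 : (starRingEnd ℂ) (g 0 2) * g 2 2 + (starRingEnd ℂ) (g 1 2) * g 1 2
        + (starRingEnd ℂ) (g 2 2) * g 0 2 = 0 := by
      have h := congrFun (congrFun hJ 2) 2
      simp [Matrix.mul_apply, Fin.sum_univ_three, Jmat, Matrix.conjTranspose_apply,
        Matrix.vecHead, Matrix.vecTail] at h
      linear_combination h
    obtain ⟨qm, qn, hq⟩ := hEis 0 2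
    rw [h22, h12, hq] at hJ22
    -- convert to the real equation
    have hcc : (starRingEnd ℂ) (sqrtm3 * (starRingEnd ℂ) ((zm:ℂ) + zn*zeta3))
          * (sqrtm3 * (starRingEnd ℂ) ((zm:ℂ) + zn*zeta3))
        = ((Complex.normSq (sqrtm3 * (starRingEnd ℂ) ((zm:ℂ) + zn*zeta3)) : ℝ) : ℂ) := by
      rw [Complex.normSq_eq_conj_mul_self]
    rw [hcc] at hJ22
    have hNS : Complex.normSq (sqrtm3 * (starRingEnd ℂ) ((zm:ℂ) + zn*zeta3))
        = 3 * ((zm^2 - zm*zn + zn^2 : ℤ) : ℝ) := by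
      rw [Complex.normSq_mul, normSq_sqrtm3, Complex.normSq_conj, eis_normSq]
    rw [hNS] at hJ22
    -- real part gives the integer relation
    have hsum : ((qm:ℂ)+qn*zeta3) + (starRingEnd ℂ) ((qm:ℂ)+qn*zeta3)
        = -(((3 * ((zm^2 - zm*zn + zn^2 : ℤ) : ℝ) : ℝ)) : ℂ) := by
      simp only [_root_.map_one, one_mul, mul_one] at hJ22
      linear_combination hJ22
    rw [Complex.add_conj] at hsum
    have hR : (2 * (((qm:ℂ)+qn*zeta3).re) : ℝ) = -(3*((zm^2 - zm*zn + zn^2 : ℤ):ℝ)) := by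
      exact_mod_cast hsum
    rw [eis_re] at hR
    have hint : 2*qm - qn + 3*(zm^2 - zm*zn + zn^2) = 0 := by
      have h2 : ((2*qm - qn + 3*(zm^2 - zm*zn + zn^2) : ℤ) : ℝ) = 0 := by
        push_cast
        push_cast at hR
        linarith
      exact_mod_cast h2
    refine ⟨(zm:ℂ) + zn*zeta3, ⟨zm, zn, rfl⟩, qn, ⟨qm + (zm^2 - zm*zn + zn^2), ?_⟩, ?_⟩
    · have hgoal : qn = (zm^2 - zm*zn + zn^2) + 2*(qm + (zm^2 - zm*zn + zn^2)) := by
        linarith [hint]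
      rw [eis_normSq]
      exact_mod_cast hgoal
    · -- matrix equality
      have h02 : g 0 2 = (-3 * ((Complex.normSq ((zm:ℂ) + zn*zeta3) : ℝ) : ℂ)
          + (qn:ℂ) * sqrtm3) / 2 := by
        rw [eq_div_iff (two_ne_zero), hq]
        apply Complex.ext
        · simp only [Complex.add_re, Complex.mul_re, Complex.neg_re, Complex.ofReal_re,
            Complex.ofReal_im, Complex.intCast_re, Complex.intCast_im, sqrtm3_re, sqrtm3_im,
            zeta3_re, zeta3_im, eis_normSq, Complex.re_ofNat, Complex.im_ofNat,
            Complex.neg_im, mul_zero, zero_mul, sub_zero, add_zero]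
          have hintR : ((2*qm - qn + 3*(zm^2 - zm*zn + zn^2) : ℤ) : ℝ) = 0 := by
            exact_mod_cast congrArg (Int.cast : ℤ → ℝ) hint
          push_cast at hintR ⊢
          linarith
        · simp only [Complex.add_im, Complex.mul_im, Complex.neg_im, Complex.ofReal_re,
            Complex.ofReal_im, Complex.intCast_re, Complex.intCast_im, sqrtm3_re, sqrtm3_im,
            zeta3_re, zeta3_im, eis_normSq, Complex.re_ofNat, Complex.im_ofNat,
            Complex.neg_re, mul_zero, zero_mul, sub_zero, add_zero, zero_add]
          push_cast
          ring
      ext i j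
      fin_cases i <;> fin_cases j <;>
        simp [nmat, h00, h10, hc0, h11, h21, h22, h12, hz, h02,
          Matrix.vecHead, Matrix.vecTail]
end
end
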